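/- arXiv:math/0410178 — 6 statements merged into one kernel-verified Lean document; each statement's English description precedes it below -/
import Mathlib

section
/- In the setting above, suppose ind(A_min) ≤ 0, ind(A_max) ≥ 0, and both d'' := −ind(A_min) > 0 and d' := ind(A_max) > 0 (i.e. the Grassmannian of index-zero domains has positive dimension). Then for every λ ∈ ℂ there exists an intermediate domain D with dim(D/D_min) = d'' (so ind(A_D) = 0) such that λ belongs to the spectrum of A_D, i.e. A_D − λ is not bijective. -/
/-!
Put `B = A - λ`. If `B` kills some nonzero `v ∈ D_max`, any intermediate domain `D` with
`dim D/D_min = d''` containing `v` works, since `B` is not injective on `D`. Otherwise `B` is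
injective on `D_max`, so `ind B_max ≤ 0`; but if `B_D` were bijective for such a `D`, index
additivity would give `ind B_max = ind B_D + (d - d'') = d' > 0`.
-/

/-- The index (dim ker − dim coker) of the restriction of `A` to `D`. -/
noncomputable def opInd {H V : Type*} [AddCommGroup H] [Module ℂ H]
    [AddCommGroup V] [Module ℂ V] (A : V →ₗ[ℂ] H) (D : Submodule ℂ V) : ℤ :=
  (Module.finrank ℂ (LinearMap.ker (A.domRestrict D)) : ℤ)
    - (Module.finrank ℂ (H ⧸ LinearMap.range (A.domRestrict D)) : ℤ)

/-- The dimension of `D / Dmin`. -/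
noncomputable def relDim {V : Type*} [AddCommGroup V] [Module ℂ V]
    (Dmin D : Submodule ℂ V) : ℕ :=
  Module.finrank ℂ (↥D ⧸ Submodule.comap D.subtype Dmin)

open Module Submodule

theorem Submodule.exists_le_finrank_eq {K V : Type*} [DivisionRing K] [AddCommGroup V]
    [Module K V] [Module.Finite K V] {p : Submodule K V} {k : ℕ} (hp : finrank K p ≤ k)
    (hk : k ≤ finrank K V) : ∃ q : Submodule K V, p ≤ q ∧ finrank K q = k := by
  induction k, hp using Nat.le_induction with
  | base => exact ⟨p, le_rfl, rfl⟩
  | succ n _ ih =>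
    obtain ⟨q, hpq, hq⟩ := ih (by omega)
    have hq_ne_top : q ≠ ⊤ := by
      rintro rfl
      rw [finrank_top] at hq
      omega
    obtain ⟨v, -, hv⟩ := SetLike.exists_of_lt hq_ne_top.lt_top
    exact ⟨q ⊔ span K {v}, hpq.trans le_sup_left, by rw [finrank_sup_span_singleton hv, hq]⟩

section Index

variable {H V : Type*} [AddCommGroup H] [Module ℂ H] [AddCommGroup V] [Module ℂ V]

theorem relDim_eq_finrank_map (Dmin D : Submodule ℂ V) :
    relDim Dmin D = finrank ℂ (D.map Dmin.mkQ) := by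
  have hker : LinearMap.ker (Dmin.mkQ ∘ₗ D.subtype) = Dmin.comap D.subtype := by
    rw [LinearMap.ker_comp, ker_mkQ]
  have hrange : LinearMap.range (Dmin.mkQ ∘ₗ D.subtype) = D.map Dmin.mkQ := by
    rw [LinearMap.range_comp, range_subtype]
  rw [relDim, ((quotEquivOfEq _ _ hker.symm).trans
    (Dmin.mkQ ∘ₗ D.subtype).quotKerEquivRange).finrank_eq, hrange]

theorem relDim_comap_mkQ (Dmin : Submodule ℂ V) (W : Submodule ℂ (V ⧸ Dmin)) :
    relDim Dmin (W.comap Dmin.mkQ) = finrank ℂ W := by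
  rw [relDim_eq_finrank_map, map_comap_eq_of_surjective Dmin.mkQ_surjective]

theorem relDim_top (Dmin : Submodule ℂ V) : relDim Dmin ⊤ = finrank ℂ (V ⧸ Dmin) := by
  rw [← comap_top Dmin.mkQ, relDim_comap_mkQ, finrank_top]

theorem exists_relDim_eq_of_mem (Dmin : Submodule ℂ V) [FiniteDimensional ℂ (V ⧸ Dmin)]
    (v : V) {k : ℕ} (hk₀ : 0 < k) (hk : k ≤ finrank ℂ (V ⧸ Dmin)) :
    ∃ D : Submodule ℂ V, Dmin ≤ D ∧ v ∈ D ∧ relDim Dmin D = k := by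
  have hspan : finrank ℂ (ℂ ∙ Dmin.mkQ v) ≤ k := by
    simpa using (finrank_span_le_card ({Dmin.mkQ v} : Set (V ⧸ Dmin))).trans hk₀
  obtain ⟨W, hvW, hW⟩ := exists_le_finrank_eq hspan hk
  exact ⟨W.comap Dmin.mkQ, le_comap_mkQ Dmin W, hvW (mem_span_singleton_self _),
    by rw [relDim_comap_mkQ, hW]⟩

theorem opInd_eq_zero_of_bijective (A : V →ₗ[ℂ] H) (D : Submodule ℂ V)
    (h : Function.Bijective (A.domRestrict D)) : opInd A D = 0 := by
  rw [opInd, LinearMap.ker_eq_bot.mpr h.injective, LinearMap.range_eq_top.mpr h.surjective,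
    finrank_bot, finrank_zero_of_subsingleton]
  rfl

theorem opInd_nonpos_of_injective (A : V →ₗ[ℂ] H) (D : Submodule ℂ V)
    (h : Function.Injective (A.domRestrict D)) : opInd A D ≤ 0 := by
  rw [opInd, LinearMap.ker_eq_bot.mpr h, finrank_bot]
  omega

end Index

theorem stmt_2_general {H : Type*} [NormedAddCommGroup H] [InnerProductSpace ℂ H]
    (Dmax : Submodule ℂ H) (A : ↥Dmax →ₗ[ℂ] H) (Dmin : Submodule ℂ ↥Dmax)
    (hcodim : FiniteDimensional ℂ (↥Dmax ⧸ Dmin))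
    (hrel : ∀ (μ : ℂ) (D : Submodule ℂ ↥Dmax), Dmin ≤ D →
      opInd (A - μ • Dmax.subtype) D = opInd (A - μ • Dmax.subtype) Dmin + relDim Dmin D)
    -- d'' = −ind A_min > 0 and d' = ind A_max > 0
    (hmin : opInd A Dmin < 0) (hmax : 0 < opInd A (⊤ : Submodule ℂ ↥Dmax)) :
    ∀ lam : ℂ, ∃ D : Submodule ℂ ↥Dmax, Dmin ≤ D ∧
      (relDim Dmin D : ℤ) = -opInd A Dmin ∧
      ¬ Function.Bijective ((A - lam • Dmax.subtype).domRestrict D) := by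
  intro lam
  have hrelB := hrel lam
  set B := A - lam • Dmax.subtype
  have hd : (finrank ℂ (↥Dmax ⧸ Dmin) : ℤ) = opInd A ⊤ - opInd A Dmin := by
    have := hrel 0 ⊤ le_top
    rw [zero_smul, sub_zero, relDim_top] at this
    omega
  have hk : ((-opInd A Dmin).toNat : ℤ) = -opInd A Dmin := Int.toNat_of_nonneg (by omega)
  have hdomain (v : ↥Dmax) : ∃ D, Dmin ≤ D ∧ v ∈ D ∧ (relDim Dmin D : ℤ) = -opInd A Dmin := by
    obtain ⟨D, hD, hvD, hdim⟩ :=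
      exists_relDim_eq_of_mem Dmin v (k := (-opInd A Dmin).toNat) (by omega) (by omega)
    exact ⟨D, hD, hvD, by rw [hdim, hk]⟩
  by_cases hinj : Function.Injective B
  · obtain ⟨D, hD, -, hdim⟩ := hdomain 0
    refine ⟨D, hD, hdim, fun hbij => ?_⟩
    have hB_max := opInd_nonpos_of_injective B ⊤ (hinj.comp Subtype.val_injective)
    have hB_D := opInd_eq_zero_of_bijective B D hbij
    have := hrelB D hD
    have := hrelB ⊤ le_top
    rw [relDim_top] at this
    omega
  · obtain ⟨v, hBv, hv⟩ : ∃ v, B v = 0 ∧ v ≠ 0 := by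
      simpa [injective_iff_map_eq_zero, and_comm] using hinj
    obtain ⟨D, hD, hvD, hdim⟩ := hdomain v
    refine ⟨D, hD, hdim, fun hbij => hv ?_⟩
    have hBv' : B.domRestrict D ⟨v, hvD⟩ = B.domRestrict D 0 := by simpa using hBv
    exact congrArg Subtype.val (hbij.injective hBv')

/-- If `d'' = −ind A_min > 0` and `d' = ind A_max > 0`, then for every `λ ∈ ℂ` there is an
intermediate domain `D` with `dim D/D_min = d''` (so `ind A_D = 0`) such that `λ ∈ spec A_D`. -/
theorem stmt_2 {H : Type*} [NormedAddCommGroup H] [InnerProductSpace ℂ H] [CompleteSpace H]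
    (Dmax : Submodule ℂ H) (A : ↥Dmax →ₗ[ℂ] H) (Dmin : Submodule ℂ ↥Dmax)
    (hcodim : FiniteDimensional ℂ (↥Dmax ⧸ Dmin))
    (hker : ∀ (μ : ℂ) (D : Submodule ℂ ↥Dmax), Dmin ≤ D →
      FiniteDimensional ℂ (LinearMap.ker ((A - μ • Dmax.subtype).domRestrict D)))
    (hclosed : ∀ (μ : ℂ) (D : Submodule ℂ ↥Dmax), Dmin ≤ D →
      IsClosed ((LinearMap.range ((A - μ • Dmax.subtype).domRestrict D) : Submodule ℂ H) : Set H))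
    (hcoker : ∀ (μ : ℂ) (D : Submodule ℂ ↥Dmax), Dmin ≤ D →
      FiniteDimensional ℂ (H ⧸ LinearMap.range ((A - μ • Dmax.subtype).domRestrict D)))
    (hrel : ∀ (μ : ℂ) (D : Submodule ℂ ↥Dmax), Dmin ≤ D →
      opInd (A - μ • Dmax.subtype) D = opInd (A - μ • Dmax.subtype) Dmin + relDim Dmin D)
    -- d'' = −ind A_min > 0 and d' = ind A_max > 0
    (hmin : opInd A Dmin < 0) (hmax : 0 < opInd A (⊤ : Submodule ℂ ↥Dmax)) :
    ∀ lam : ℂ, ∃ D : Submodule ℂ ↥Dmax, Dmin ≤ D ∧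
      (relDim Dmin D : ℤ) = -opInd A Dmin ∧
      ¬ Function.Bijective ((A - lam • Dmax.subtype).domRestrict D) :=
  stmt_2_general Dmax A Dmin hcodim hrel hmin hmax
end

section
/- Let E be a finite dimensional complex inner product space of dimension d, 0 < d₀ < d, and W a subspace of dimension d₀. There is a constant C > 0 (depending only on d) such that for every subspace V of dimension d − d₀ with V ∩ W = 0, the projection π_{V,W} : E → E onto V along W (with respect to E = V ⊕ W) satisfies ‖π_{V,W}‖ ≤ C / δ(V, W), where δ(V, W) = |det[V | W]| is computed using orthonormal bases of V and W relative to a fixed orthonormal basis of E. -/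
/-!
The columns `φ`, `ψ` of `[V | W]` form a basis `b` of `E` of unit vectors, and `[V | W]` is
the change-of-basis matrix `M` from `b` to `u`, so its entries have modulus at most `1`. By
Cramer's rule and the Leibniz formula the entries of `M⁻¹` are bounded by `d! / |det M|`, and
they express the `b`-coordinates of `x` through its `u`-coordinates, which are bounded by `‖x‖`.
Since `π` sends every `b j` to `b j` or to `0`, `‖π x‖ ≤ ∑ⱼ |b.repr x j| ≤ d² d! / δ(V, W) · ‖x‖`.
-/

/-- The `d × d` matrix `[V | W]` whose first `n` columns are the coordinates (in the fixed
orthonormal basis `u` of `E`) of an orthonormal basis `φ` of `V` and whose last `m` columns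
are those of an orthonormal basis `ψ` of `W`. -/
noncomputable def colMat {E : Type*} [NormedAddCommGroup E] [InnerProductSpace ℂ E]
    {n m : ℕ} {V W : Submodule ℂ E}
    (u : OrthonormalBasis (Fin (n + m)) ℂ E)
    (φ : OrthonormalBasis (Fin n) ℂ ↥V) (ψ : OrthonormalBasis (Fin m) ℂ ↥W) :
    Matrix (Fin (n + m)) (Fin (n + m)) ℂ :=
  Matrix.of fun i j =>
    u.repr (Sum.elim (fun k => ((φ k : ↥V) : E)) (fun k => ((ψ k : ↥W) : E))
      (finSumFinEquiv.symm j)) i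

namespace Matrix

variable {ι 𝕜 : Type*} [Fintype ι] [DecidableEq ι] [NormedField 𝕜]

theorem norm_det_le_factorial (A : Matrix ι ι 𝕜) (hA : ∀ i j, ‖A i j‖ ≤ 1) :
    ‖A.det‖ ≤ (Fintype.card ι).factorial := by
  simpa using det_le (abv := IsAbsoluteValue.toAbsoluteValue (norm : 𝕜 → ℝ)) hA

/-- Cramer's rule; when `A` is singular both sides vanish. -/
theorem norm_inv_apply_le (A : Matrix ι ι 𝕜) (hA : ∀ i j, ‖A i j‖ ≤ 1) (i j : ι) :
    ‖A⁻¹ i j‖ ≤ (Fintype.card ι).factorial / ‖A.det‖ := by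
  rw [inv_def, Ring.inverse_eq_inv, smul_apply, smul_eq_mul, norm_mul, norm_inv,
    inv_mul_eq_div, adjugate_apply]
  gcongr
  refine norm_det_le_factorial _ fun k l => ?_
  rw [updateRow_apply]
  split_ifs
  · rw [Pi.single_apply]; split_ifs <;> simp
  · exact hA k l

end Matrix

open Module

section

variable {𝕜 E F ι : Type*} [RCLike 𝕜] [NormedAddCommGroup E] [InnerProductSpace 𝕜 E]
  [NormedAddCommGroup F] [NormedSpace 𝕜 F] [Fintype ι]

theorem Module.Basis.norm_apply_le_sum_repr (b : Basis ι 𝕜 E) (f : E →ₗ[𝕜] F) (x : E) :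
    ‖f x‖ ≤ ∑ j, ‖b.repr x j‖ * ‖f (b j)‖ := by
  calc ‖f x‖ = ‖∑ j, b.repr x j • f (b j)‖ := by
        conv_lhs => rw [← b.sum_repr x]
        simp only [map_sum, map_smul]
    _ ≤ ∑ j, ‖b.repr x j‖ * ‖f (b j)‖ :=
        (norm_sum_le _ _).trans_eq (Finset.sum_congr rfl fun j _ => _root_.norm_smul _ _)

theorem OrthonormalBasis.norm_repr_apply_le (u : OrthonormalBasis ι 𝕜 E) (x : E) (i : ι) :
    ‖u.repr x i‖ ≤ ‖x‖ :=
  (PiLp.norm_apply_le _ i).trans_eq (u.repr.norm_map x)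

theorem OrthonormalBasis.norm_toMatrix_apply_le (u : OrthonormalBasis ι 𝕜 E) {v : ι → E}
    (hv : ∀ j, ‖v j‖ ≤ 1) (i j : ι) : ‖u.toBasis.toMatrix v i j‖ ≤ 1 := by
  rw [Basis.toMatrix_apply, u.coe_toBasis_repr_apply]
  exact (u.norm_repr_apply_le _ i).trans (hv j)

theorem Module.Basis.norm_repr_apply_le [DecidableEq ι] (u : OrthonormalBasis ι 𝕜 E)
    (b : Basis ι 𝕜 E) (hb : ∀ j, ‖b j‖ ≤ 1) (x : E) (j : ι) :
    ‖b.repr x j‖ ≤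
      Fintype.card ι * (Fintype.card ι).factorial / ‖(u.toBasis.toMatrix b).det‖ * ‖x‖ := by
  have hinv : b.toMatrix u.toBasis = (u.toBasis.toMatrix b)⁻¹ :=
    (Matrix.inv_eq_right_inv (u.toBasis.toMatrix_mul_toMatrix_flip b)).symm
  rw [← Basis.toMatrix_mulVec_repr (b' := b) (b := u.toBasis), hinv, Matrix.mulVec, dotProduct]
  calc ‖∑ i, (u.toBasis.toMatrix b)⁻¹ j i * u.toBasis.repr x i‖
      ≤ ∑ i : ι, (Fintype.card ι).factorial / ‖(u.toBasis.toMatrix b).det‖ * ‖x‖ := by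
        refine (norm_sum_le _ _).trans (Finset.sum_le_sum fun i _ => ?_)
        rw [norm_mul, u.coe_toBasis_repr_apply]
        gcongr
        · exact Matrix.norm_inv_apply_le _ (u.norm_toMatrix_apply_le hb) j i
        · exact u.norm_repr_apply_le x i
    _ = _ := by simp [mul_div_assoc, mul_assoc]

theorem LinearMap.norm_toContinuousLinearMap_le_of_basis [DecidableEq ι] [FiniteDimensional 𝕜 E]
    (u : OrthonormalBasis ι 𝕜 E) (b : Basis ι 𝕜 E) (hb : ∀ j, ‖b j‖ ≤ 1) (f : E →ₗ[𝕜] F)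
    (hf : ∀ j, ‖f (b j)‖ ≤ 1) :
    ‖f.toContinuousLinearMap‖ ≤
      Fintype.card ι ^ 2 * (Fintype.card ι).factorial / ‖(u.toBasis.toMatrix b).det‖ := by
  refine ContinuousLinearMap.opNorm_le_bound _ (by positivity) fun x => ?_
  calc ‖f x‖ ≤ ∑ j, ‖b.repr x j‖ * ‖f (b j)‖ := b.norm_apply_le_sum_repr f x
    _ ≤ ∑ j : ι,
          Fintype.card ι * (Fintype.card ι).factorial / ‖(u.toBasis.toMatrix b).det‖ * ‖x‖ :=
        Finset.sum_le_sum fun j _ => (mul_le_of_le_one_right (norm_nonneg _) (hf j)).trans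
          (b.norm_repr_apply_le u hb x j)
    _ = Fintype.card ι ^ 2 * (Fintype.card ι).factorial / ‖(u.toBasis.toMatrix b).det‖ * ‖x‖ := by
        simp only [Finset.sum_const, Finset.card_univ, nsmul_eq_mul]
        ring

end

theorem LinearIndependent.sumElim_of_disjoint {R M ι κ : Type*} [Ring R] [AddCommGroup M]
    [Module R M] {V W : Submodule R M} {φ : ι → V} {ψ : κ → W} (hφ : LinearIndependent R φ)
    (hψ : LinearIndependent R ψ) (hVW : Disjoint V W) :
    LinearIndependent R (Sum.elim (fun i => (φ i : M)) (fun k => (ψ k : M))) := by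
  refine (hφ.map' V.subtype V.ker_subtype).sum_type (hψ.map' W.subtype W.ker_subtype) ?_
  refine hVW.mono ?_ ?_ <;> rw [Submodule.span_le] <;> rintro _ ⟨k, rfl⟩
  exacts [(φ k).2, (ψ k).2]

section ColumnFamily

variable {E : Type*} [NormedAddCommGroup E] [InnerProductSpace ℂ E] {n m : ℕ}
  {V W : Submodule ℂ E} (φ : OrthonormalBasis (Fin n) ℂ V) (ψ : OrthonormalBasis (Fin m) ℂ W)

noncomputable def colFamily : Fin (n + m) → E :=
  fun j => Sum.elim (fun k => (φ k : E)) (fun k => (ψ k : E)) (finSumFinEquiv.symm j)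

theorem colMat_eq_toMatrix (u : OrthonormalBasis (Fin (n + m)) ℂ E) :
    colMat u φ ψ = u.toBasis.toMatrix (colFamily φ ψ) := by
  ext i j
  rw [Basis.toMatrix_apply, u.coe_toBasis_repr_apply]
  rfl

theorem colFamily_mem_or (j : Fin (n + m)) : colFamily φ ψ j ∈ V ∨ colFamily φ ψ j ∈ W := by
  unfold colFamily
  rcases finSumFinEquiv.symm j with k | k
  exacts [.inl (φ k).2, .inr (ψ k).2]

theorem norm_colFamily (j : Fin (n + m)) : ‖colFamily φ ψ j‖ = 1 := by
  unfold colFamily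
  rcases finSumFinEquiv.symm j with k | k
  exacts [φ.orthonormal.1 k, ψ.orthonormal.1 k]

theorem linearIndependent_colFamily (hVW : V ⊓ W = ⊥) : LinearIndependent ℂ (colFamily φ ψ) :=
  (φ.toBasis.linearIndependent.sumElim_of_disjoint ψ.toBasis.linearIndependent
    (disjoint_iff.2 hVW)).comp _ finSumFinEquiv.symm.injective

end ColumnFamily

theorem stmt_7_general {E : Type*} [NormedAddCommGroup E] [InnerProductSpace ℂ E]
    [FiniteDimensional ℂ E]
    (n m : ℕ) (hn : 0 < n)
    (u : OrthonormalBasis (Fin (n + m)) ℂ E) :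
    ∃ C > 0, ∀ (V W : Submodule ℂ E),
      Module.finrank ℂ ↥V = n → Module.finrank ℂ ↥W = m → V ⊓ W = ⊥ →
      ∀ (φ : OrthonormalBasis (Fin n) ℂ ↥V) (ψ : OrthonormalBasis (Fin m) ℂ ↥W),
      ∀ π : E →ₗ[ℂ] E, (∀ x ∈ V, π x = x) → (∀ x ∈ W, π x = 0) →
        LinearMap.range π ≤ V →
        ‖LinearMap.toContinuousLinearMap π‖ ≤
          C / ‖Matrix.det (colMat u φ ψ)‖ := by
  refine ⟨(n + m) ^ 2 * (n + m).factorial, by positivity, ?_⟩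
  intro V W _ _ hVW φ ψ π hπV hπW _
  let b := basisOfLinearIndependentOfCardEqFinrank' (colFamily φ ψ)
    (linearIndependent_colFamily φ ψ hVW) (finrank_eq_card_basis u.toBasis).symm
  have hb : ⇑b = colFamily φ ψ := coe_basisOfLinearIndependentOfCardEqFinrank' _ _ _
  have hπb : ∀ j, ‖π (b j)‖ ≤ 1 := by
    intro j
    rw [hb]
    rcases colFamily_mem_or φ ψ j with h | h
    · rw [hπV _ h, norm_colFamily]
    · rw [hπW _ h, norm_zero]; exact zero_le_one
  simpa [colMat_eq_toMatrix, hb] using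
    π.norm_toContinuousLinearMap_le_of_basis u b (fun j => (hb ▸ norm_colFamily φ ψ j).le) hπb

/-- There is a constant `C > 0`, depending only on the dimension, such that for all
complementary subspaces `V`, `W` with `V ∩ W = 0` the projection `π_{V,W}` onto `V`
along `W` satisfies `‖π_{V,W}‖ ≤ C / δ(V,W)`. -/
theorem stmt_7 {E : Type*} [NormedAddCommGroup E] [InnerProductSpace ℂ E]
    [FiniteDimensional ℂ E]
    (n m : ℕ) (hn : 0 < n) (hm : 0 < m)
    (u : OrthonormalBasis (Fin (n + m)) ℂ E) :
    ∃ C > 0, ∀ (V W : Submodule ℂ E),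
      Module.finrank ℂ ↥V = n → Module.finrank ℂ ↥W = m → V ⊓ W = ⊥ →
      ∀ (φ : OrthonormalBasis (Fin n) ℂ ↥V) (ψ : OrthonormalBasis (Fin m) ℂ ↥W),
      ∀ π : E →ₗ[ℂ] E, (∀ x ∈ V, π x = x) → (∀ x ∈ W, π x = 0) →
        LinearMap.range π ≤ V →
        ‖LinearMap.toContinuousLinearMap π‖ ≤
          C / ‖Matrix.det (colMat u φ ψ)‖ :=
  stmt_7_general n m hn u
end

section
/- Let A_min ⊆ A_max be closed operators on a Hilbert space H with domains D_min ⊆ D_max, dim(D_max/D_min) < ∞, all intermediate extensions Fredholm with ind(A_D) = ind(A_min) + dim(D/D_min). Suppose λ lies in the background resolvent set and D is an intermediate domain with A_D − λ bijective. Let B_D(λ) = (A_D − λ)^{-1}, let B_max(λ) be any bounded right inverse of A_max − λ mapping H into D_max, let B_min(λ) be any bounded left inverse of A_min − λ defined on H with range in D_min, and let π_{K_λ,D} be the projection of D_max onto K_λ = ker(A_max − λ) along D. Then B_D(λ) = B_max(λ) − (I − B_min(λ)(A_max − λ)) ∘ π_{K_λ,D} ∘ B_max(λ). -/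
/-!
Since `π_{K_λ,D}` maps into `K_λ`, the correction term `B_min(λ)(A_max − λ)π B_max(λ)` vanishes.
Both `B_max(λ) f` and `B_D(λ) f` solve `(A_max − λ) u = f`, so their difference lies in `K_λ`
while `B_D(λ) f ∈ D`; hence `π B_max(λ) f = B_max(λ) f − B_D(λ) f`.
-/

theorem LinearMap.projection_apply_eq_sub_of_map_eq {R M N : Type*} [Ring R] [AddCommGroup M]
    [Module R M] [AddCommGroup N] [Module R N] (T : M →ₗ[R] N) (D : Submodule R M)
    (π : M →ₗ[R] M) (hπ1 : ∀ u ∈ LinearMap.ker T, π u = u) (hπ0 : ∀ u ∈ D, π u = 0)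
    {u v : M} (hv : v ∈ D) (huv : T u = T v) : π u = u - v := by
  have hker : u - v ∈ LinearMap.ker T := by
    rw [LinearMap.mem_ker, map_sub, huv, sub_self]
  calc π u = π (u - v) + π v := by rw [← map_add, sub_add_cancel]
    _ = u - v := by rw [hπ1 _ hker, hπ0 _ hv, add_zero]

theorem stmt_8_general {H : Type*} [NormedAddCommGroup H] [InnerProductSpace ℂ H]
    (Dmax : Submodule ℂ H) (A : ↥Dmax →ₗ[ℂ] H) (D : Submodule ℂ ↥Dmax)
    (lam : ℂ)
    (BD : H →ₗ[ℂ] ↥Dmax) (hBD0 : ∀ f, BD f ∈ D)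
    (hBD1 : ∀ f, (A - lam • Dmax.subtype) (BD f) = f)
    -- B_max(λ): a right inverse of A_max − λ
    (Bmax : H →ₗ[ℂ] ↥Dmax) (hBmax : ∀ f, (A - lam • Dmax.subtype) (Bmax f) = f)
    -- B_min(λ): a left inverse of A_min − λ with range in D_min
    (Bmin : H →ₗ[ℂ] ↥Dmax)
    -- π_{K_λ,D}: the projection of D_max onto K_λ = ker(A_max − λ) along D
    (π : ↥Dmax →ₗ[ℂ] ↥Dmax)
    (hπK : ∀ u, π u ∈ LinearMap.ker (A - lam • Dmax.subtype))
    (hπ1 : ∀ u ∈ LinearMap.ker (A - lam • Dmax.subtype), π u = u)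
    (hπ0 : ∀ u ∈ D, π u = 0) :
    ∀ f : H, BD f =
      Bmax f - (π (Bmax f) - Bmin ((A - lam • Dmax.subtype) (π (Bmax f)))) := by
  intro f
  have hπB : π (Bmax f) = Bmax f - BD f :=
    (A - lam • Dmax.subtype).projection_apply_eq_sub_of_map_eq D π hπ1 hπ0 (hBD0 f)
      (by rw [hBmax, hBD1])
  rw [LinearMap.mem_ker.mp (hπK _), map_zero, sub_zero, hπB, sub_sub_cancel]

/-- The resolvent formula
`B_D(λ) = B_max(λ) − (I − B_min(λ)(A−λ)) π_{K_λ,D} B_max(λ)`. -/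
theorem stmt_8 {H : Type*} [NormedAddCommGroup H] [InnerProductSpace ℂ H] [CompleteSpace H]
    (Dmax : Submodule ℂ H) (A : ↥Dmax →ₗ[ℂ] H) (Dmin D : Submodule ℂ ↥Dmax)
    (hDD : Dmin ≤ D) (hcodim : FiniteDimensional ℂ (↥Dmax ⧸ Dmin))
    (lam : ℂ)
    -- λ in the background resolvent set
    (hinj : Function.Injective ((A - lam • Dmax.subtype).domRestrict Dmin))
    (hsurj : Function.Surjective (A - lam • Dmax.subtype))
    -- A_D − λ bijective, with inverse B_D(λ)
    (hbij : Function.Bijective ((A - lam • Dmax.subtype).domRestrict D))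
    (BD : H →ₗ[ℂ] ↥Dmax) (hBD0 : ∀ f, BD f ∈ D)
    (hBD1 : ∀ f, (A - lam • Dmax.subtype) (BD f) = f)
    -- B_max(λ): a right inverse of A_max − λ
    (Bmax : H →ₗ[ℂ] ↥Dmax) (hBmax : ∀ f, (A - lam • Dmax.subtype) (Bmax f) = f)
    -- B_min(λ): a left inverse of A_min − λ with range in D_min
    (Bmin : H →ₗ[ℂ] ↥Dmax) (hBmin0 : ∀ f, Bmin f ∈ Dmin)
    (hBmin1 : ∀ u : ↥Dmax, u ∈ Dmin → Bmin ((A - lam • Dmax.subtype) u) = u)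
    -- π_{K_λ,D}: the projection of D_max onto K_λ = ker(A_max − λ) along D
    (π : ↥Dmax →ₗ[ℂ] ↥Dmax)
    (hπK : ∀ u, π u ∈ LinearMap.ker (A - lam • Dmax.subtype))
    (hπ1 : ∀ u ∈ LinearMap.ker (A - lam • Dmax.subtype), π u = u)
    (hπ0 : ∀ u ∈ D, π u = 0) :
    ∀ f : H, BD f =
      Bmax f - (π (Bmax f) - Bmin ((A - lam • Dmax.subtype) (π (Bmax f)))) :=
  stmt_8_general Dmax A D lam BD hBD0 hBD1 Bmax hBmax Bmin π hπK hπ1 hπ0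
end

section
/- Let H be a Hilbert space, A a closed operator with domains D_min ⊆ D_max as above, and A* its formal adjoint with domains D_min(A*) ⊆ D_max(A*). Let E_max(A) = D_max ∩ ker(A*A + I) be the (·,·)_A-orthogonal of D_min in D_max, and define E_max(A*) analogously. Then for u ∈ E_max(A), Au ∈ E_max(A*), and the map u ↦ Au is an isometry from (E_max(A), (·,·)_A) to (E_max(A*), (·,·)_{A*}). Moreover, for u ∈ E_max(A) and v ∈ D_max(A*), (Au, v)_{A*} = (Au, v) − (u, A*v). -/
open scoped ComplexInnerProductSpace

theorem stmt_12_general {H : Type*} [NormedAddCommGroup H] [InnerProductSpace ℂ H]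
    (Dmax DmaxS : Submodule ℂ H) (A : ↥Dmax →ₗ[ℂ] H) (As : ↥DmaxS →ₗ[ℂ] H)
    -- u ∈ E_max(A): A u ∈ D_max(A*) and A*(A u) = −u
    (u : ↥Dmax) (hAu : A u ∈ DmaxS) (hk : As ⟨A u, hAu⟩ = -(u : H)) :
    -- (i) A u ∈ E_max(A*): A*(A u) ∈ D_max(A) and A(A*(A u)) = −A u
    (∃ h2 : As ⟨A u, hAu⟩ ∈ Dmax, A ⟨As ⟨A u, hAu⟩, h2⟩ = -(A u)) ∧
    -- (i') u ↦ A u is an isometry from E_max(A) to E_max(A*) for the graph inner products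
    (∀ (v : ↥Dmax) (hAv : A v ∈ DmaxS), As ⟨A v, hAv⟩ = -(v : H) →
      ⟪As ⟨A u, hAu⟩, As ⟨A v, hAv⟩⟫ + ⟪A u, A v⟫
        = ⟪A u, A v⟫ + ⟪(u : H), (v : H)⟫) ∧
    -- (ii) (A u, v)_{A*} = (A u, v) − (u, A* v) for all v ∈ D_max(A*)
    (∀ v : ↥DmaxS,
      ⟪As ⟨A u, hAu⟩, As v⟫ + ⟪A u, (v : H)⟫
        = ⟪A u, (v : H)⟫ - ⟪(u : H), As v⟫) := by
  have hAsAu : As ⟨A u, hAu⟩ ∈ Dmax := hk ▸ neg_mem u.2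
  refine ⟨⟨hAsAu, ?_⟩, fun v hAv hkv => ?_, fun v => ?_⟩
  · rw [show (⟨_, hAsAu⟩ : Dmax) = -u from Subtype.ext hk, map_neg]
  · rw [hk, hkv, inner_neg_neg, add_comm]
  · rw [hk, inner_neg_left, neg_add_eq_sub]

/-- If `u ∈ E_max(A) = D_max(A) ∩ ker(A*A + I)` (so `Au ∈ D_max(A*)` and `A*Au = −u`), then
`Au ∈ E_max(A*) = D_max(A*) ∩ ker(AA* + I)`, the map `u ↦ Au` is an isometry for the graph
inner products, and `(Au, v)_{A*} = (Au, v) − (u, A*v)` for all `v ∈ D_max(A*)`. -/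
theorem stmt_12 {H : Type*} [NormedAddCommGroup H] [InnerProductSpace ℂ H] [CompleteSpace H]
    (Dmax DmaxS : Submodule ℂ H) (A : ↥Dmax →ₗ[ℂ] H) (As : ↥DmaxS →ₗ[ℂ] H)
    (Dmin : Submodule ℂ ↥Dmax) (DminS : Submodule ℂ ↥DmaxS)
    -- u ∈ E_max(A): A u ∈ D_max(A*) and A*(A u) = −u
    (u : ↥Dmax) (hAu : A u ∈ DmaxS) (hk : As ⟨A u, hAu⟩ = -(u : H)) :
    -- (i) A u ∈ E_max(A*): A*(A u) ∈ D_max(A) and A(A*(A u)) = −A u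
    (∃ h2 : As ⟨A u, hAu⟩ ∈ Dmax, A ⟨As ⟨A u, hAu⟩, h2⟩ = -(A u)) ∧
    -- (i') u ↦ A u is an isometry from E_max(A) to E_max(A*) for the graph inner products
    (∀ (v : ↥Dmax) (hAv : A v ∈ DmaxS), As ⟨A v, hAv⟩ = -(v : H) →
      ⟪As ⟨A u, hAu⟩, As ⟨A v, hAv⟩⟫ + ⟪A u, A v⟫
        = ⟪A u, A v⟫ + ⟪(u : H), (v : H)⟫) ∧
    -- (ii) (A u, v)_{A*} = (A u, v) − (u, A* v) for all v ∈ D_max(A*)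
    (∀ v : ↥DmaxS,
      ⟪As ⟨A u, hAu⟩, As v⟫ + ⟪A u, (v : H)⟫
        = ⟪A u, (v : H)⟫ - ⟪(u : H), As v⟫) :=
  stmt_12_general Dmax DmaxS A As u hAu hk
end

section
/- Let H be a Hilbert space, (κ_ρ) a one-parameter group of unitaries on H, A a closed operator with domain D_max that is κ-homogeneous of degree m (κ_ρ^{-1} A κ_ρ = ρ^m A). Fix λ in the background resolvent set, K_λ = ker(A − λ) on D_max finite dimensional, and endow D_max with the graph inner product (u,v)_A = (Au,Av)+(u,v). Let π_{K_λ} : D_max → D_max be the graph-orthogonal projection onto K_λ and let p_{K_λ} : H → H be the H-orthogonal projection onto K_λ. Then κ_ρ maps K_λ onto K_{ρ^m λ} and κ_ρ^{-1} π_{K_{ρ^m λ}} κ_ρ = [(1+|λ|²)/(1+|ρ^m λ|²)] ρ^{2m} π_{K_λ} + [(1−ρ^{2m})/(1+|ρ^m λ|²)] p_{K_λ}. -/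
open scoped ComplexInnerProductSpace

/-!
Pulling the graph inner product back along `κ_ρ` gives, by homogeneity,
`(κ_ρ v, κ_ρ x)_A = ρ^{2m} (A v, A x) + (v, x) = ρ^{2m} (v, x)_A + (1 - ρ^{2m}) (v, x)`, and `κ_ρ`
carries `K_λ` onto `K_{ρ^m λ}`. Hence `κ_ρ⁻¹ π_{K_{ρ^m λ}} κ_ρ` is the orthogonal projection onto
`K_λ` for this pulled-back form. Since `(v, x)_A = (v, π_{K_λ} x)_A = (1 + |λ|²)(v, π_{K_λ} x)` and
`(v, x) = (v, p_{K_λ} x)` for `v ∈ K_λ`, that projection is the stated combination of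
`π_{K_λ}` and `p_{K_λ}`; uniqueness of graph-orthogonal projections finishes the proof.
-/

section GraphInner

variable {H : Type*} [NormedAddCommGroup H] [InnerProductSpace ℂ H] {D : Submodule ℂ H}
  (A : D →ₗ[ℂ] H)

noncomputable def graphInner (u v : D) : ℂ := ⟪A u, A v⟫ + ⟪(u : H), (v : H)⟫

variable {A}

theorem mem_ker_sub_smul_subtype_iff {μ : ℂ} {x : D} :
    x ∈ LinearMap.ker (A - μ • D.subtype) ↔ A x = μ • (x : H) := by
  rw [LinearMap.mem_ker, LinearMap.sub_apply, LinearMap.smul_apply, Submodule.subtype_apply,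
    sub_eq_zero]

theorem eq_of_graphInner_sub_eq_zero {K : Submodule ℂ D} {U x y : D} (hx : x ∈ K) (hy : y ∈ K)
    (hUx : ∀ v ∈ K, graphInner A v (U - x) = 0) (hUy : ∀ v ∈ K, graphInner A v (U - y) = 0) :
    x = y := by
  have hd : x - y ∈ K := K.sub_mem hx hy
  have hself : graphInner A (x - y) (x - y) = 0 := by
    have h := congrArg₂ (· - ·) (hUy _ hd) (hUx _ hd)
    simp only [graphInner, map_sub, Submodule.coe_sub, inner_sub_right, sub_zero] at h ⊢
    linear_combination h
  simp only [graphInner, inner_self_eq_norm_sq_to_K] at hself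
  norm_cast at hself
  rw [RCLike.ofReal_eq_zero] at hself
  have hnorm : ‖x - y‖ = 0 := by
    nlinarith [sq_nonneg ‖A (x - y)‖, norm_nonneg (x - y)]
  exact sub_eq_zero.mp (norm_eq_zero.mp hnorm)

section Homogeneous

variable {T : H ≃ₗᵢ[ℂ] H} {c : ℝ}
  (hT : ∀ (u : D) (h : T u ∈ D), A ⟨T u, h⟩ = (c : ℂ) • T (A u))
include hT

theorem mem_ker_sub_smul_iff_of_coe_eq_map (hc : c ≠ 0) {μ : ℂ} {v v₂ : D}
    (hv₂ : (v₂ : H) = T v) :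
    v₂ ∈ LinearMap.ker (A - ((c : ℂ) * μ) • D.subtype) ↔
      v ∈ LinearMap.ker (A - μ • D.subtype) := by
  obtain ⟨v₂, hD⟩ := v₂
  simp only at hv₂
  subst hv₂
  rw [mem_ker_sub_smul_subtype_iff, mem_ker_sub_smul_subtype_iff, hT v hD, mul_smul,
    (smul_right_injective H (Complex.ofReal_ne_zero.mpr hc)).eq_iff, Submodule.coe_mk,
    ← T.map_smul, T.injective.eq_iff]

theorem graphInner_of_coe_eq_map {v x v₂ x₂ : D} (hv₂ : (v₂ : H) = T v)
    (hx₂ : (x₂ : H) = T x) :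
    graphInner A v₂ x₂ = ((c ^ 2 : ℝ) : ℂ) * ⟪A v, A x⟫ + ⟪(v : H), (x : H)⟫ := by
  obtain ⟨v₂, hvD⟩ := v₂
  obtain ⟨x₂, hxD⟩ := x₂
  simp only at hv₂ hx₂
  subst hv₂ hx₂
  simp only [graphInner, hT, inner_smul_left, inner_smul_right,
    LinearIsometryEquiv.inner_map_map, Complex.conj_ofReal]
  push_cast
  ring

end Homogeneous

/-- `w` is the projection of `u` onto `K_λ` that is orthogonal for the form
`s (A ·, A ·) + (·, ·) = s (·, ·)_A + (1 - s) (·, ·)`, given the graph-orthogonal projection `P`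
and an `H`-orthogonal projection `q` of `u` onto `K_λ`. -/
theorem weighted_inner_sub_combination_eq_zero {lam : ℂ} {s : ℝ} (hs : 1 + s * ‖lam‖ ^ 2 ≠ 0)
    {P : D →ₗ[ℂ] D} (hPr : ∀ u, P u ∈ LinearMap.ker (A - lam • D.subtype))
    (hPorth : ∀ u, ∀ v ∈ LinearMap.ker (A - lam • D.subtype), graphInner A v (u - P u) = 0)
    {u q : D} (hq : q ∈ LinearMap.ker (A - lam • D.subtype))
    (hqorth : ∀ v ∈ LinearMap.ker (A - lam • D.subtype), ⟪(v : H), (u : H) - q⟫ = 0)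
    {v : D} (hv : v ∈ LinearMap.ker (A - lam • D.subtype)) :
    let w : D := (((1 + ‖lam‖ ^ 2) / (1 + s * ‖lam‖ ^ 2) * s : ℝ) : ℂ) • P u
      + (((1 - s) / (1 + s * ‖lam‖ ^ 2) : ℝ) : ℂ) • q
    (s : ℂ) * ⟪A v, A (u - w)⟫ + ⟪(v : H), ((u - w : D) : H)⟫ = 0 := by
  intro w
  rw [mem_ker_sub_smul_subtype_iff] at hv hq
  have hPu := mem_ker_sub_smul_subtype_iff.mp (hPr u)
  have E1 := hPorth u v (mem_ker_sub_smul_subtype_iff.mpr hv)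
  have E2 := hqorth v (mem_ker_sub_smul_subtype_iff.mpr hv)
  have h1 : (((1 + ‖lam‖ ^ 2) / (1 + s * ‖lam‖ ^ 2) * s : ℝ) : ℂ) * (1 + s * ‖lam‖ ^ 2)
      = s * (1 + ‖lam‖ ^ 2) := by
    have : (1 + ‖lam‖ ^ 2) / (1 + s * ‖lam‖ ^ 2) * s * (1 + s * ‖lam‖ ^ 2)
        = s * (1 + ‖lam‖ ^ 2) := by rw [mul_right_comm, div_mul_cancel₀ _ hs, mul_comm]
    exact_mod_cast this
  have h2 : (((1 - s) / (1 + s * ‖lam‖ ^ 2) : ℝ) : ℂ) * (1 + s * ‖lam‖ ^ 2) = 1 - s := by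
    have : (1 - s) / (1 + s * ‖lam‖ ^ 2) * (1 + s * ‖lam‖ ^ 2) = 1 - s := by field_simp
    exact_mod_cast this
  have hL : (starRingEnd ℂ) lam * lam = (‖lam‖ : ℂ) ^ 2 := Complex.conj_mul' lam
  simp only [graphInner, w, map_sub, map_add, map_smul, hv, hq, hPu, Submodule.coe_sub,
    Submodule.coe_add, Submodule.coe_smul, inner_sub_right, inner_add_right, inner_smul_right,
    inner_smul_left] at E1 E2 ⊢
  generalize (((1 + ‖lam‖ ^ 2) / (1 + s * ‖lam‖ ^ 2) * s : ℝ) : ℂ) = c₁ at h1 ⊢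
  generalize (((1 - s) / (1 + s * ‖lam‖ ^ 2) : ℝ) : ℂ) = c₂ at h2 ⊢
  linear_combination (s : ℂ) * E1 + (1 - (s : ℂ)) * E2 - ⟪(v : H), (P u : H)⟫ * h1
    - ⟪(v : H), (q : H)⟫ * h2
    + s * ((1 - c₁) * ⟪(v : H), (P u : H)⟫ - c₂ * ⟪(v : H), (q : H)⟫) * hL

end GraphInner

theorem stmt_14_general {H : Type*} [NormedAddCommGroup H] [InnerProductSpace ℂ H]
    (κ : ℝ → (H ≃ₗᵢ[ℂ] H))
    (hκmul : ∀ ρ σ : ℝ, 0 < ρ → 0 < σ → ∀ x : H, κ (ρ * σ) x = κ ρ (κ σ x))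
    (hκone : ∀ x : H, κ 1 x = x)
    (Dmax : Submodule ℂ H) (m : ℕ)
    (A : ↥Dmax →ₗ[ℂ] H)
    (hκDmax : ∀ ρ : ℝ, 0 < ρ → ∀ x ∈ Dmax, κ ρ x ∈ Dmax)
    (hhom : ∀ (ρ : ℝ), 0 < ρ → ∀ (u : ↥Dmax) (h : κ ρ (u : H) ∈ Dmax),
      A ⟨κ ρ (u : H), h⟩ = ((ρ ^ m : ℝ) : ℂ) • κ ρ (A u))
    (lam : ℂ) (ρ : ℝ) (hρ : 0 < ρ)
    -- P1 = π_{K_λ}: the graph-orthogonal projection of D_max onto K_λ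
    (P1 : ↥Dmax →ₗ[ℂ] ↥Dmax)
    (hP1r : ∀ u, P1 u ∈ LinearMap.ker (A - lam • Dmax.subtype))
    (hP1orth : ∀ (u : ↥Dmax), ∀ v ∈ LinearMap.ker (A - lam • Dmax.subtype),
      ⟪A v, A (u - P1 u)⟫ + ⟪(v : H), ((u - P1 u : ↥Dmax) : H)⟫ = 0)
    -- P2 = π_{K_{ρ^m λ}}: the graph-orthogonal projection of D_max onto K_{ρ^m λ}
    (P2 : ↥Dmax →ₗ[ℂ] ↥Dmax)
    (hP2r : ∀ u, P2 u ∈ LinearMap.ker (A - (((ρ ^ m : ℝ) : ℂ) * lam) • Dmax.subtype))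
    (hP2orth : ∀ (u : ↥Dmax), ∀ v ∈ LinearMap.ker (A - (((ρ ^ m : ℝ) : ℂ) * lam) • Dmax.subtype),
      ⟪A v, A (u - P2 u)⟫ + ⟪(v : H), ((u - P2 u : ↥Dmax) : H)⟫ = 0)
    -- p = p_{K_λ}: the H-orthogonal projection onto K_λ (viewed inside H)
    (p : H →ₗ[ℂ] H)
    (hpr : ∀ w : H, p w ∈ Submodule.map Dmax.subtype (LinearMap.ker (A - lam • Dmax.subtype)))
    (hporth : ∀ (w : H), ∀ v ∈ Submodule.map Dmax.subtype
        (LinearMap.ker (A - lam • Dmax.subtype)), ⟪v, w - p w⟫ = 0) :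
    -- κ_ρ maps K_λ into K_{ρ^m λ} ...
    (∀ u : ↥Dmax, u ∈ LinearMap.ker (A - lam • Dmax.subtype) →
      κ ρ (u : H) ∈ Submodule.map Dmax.subtype
        (LinearMap.ker (A - (((ρ ^ m : ℝ) : ℂ) * lam) • Dmax.subtype))) ∧
    -- ... and the projection identity holds
    (∀ (u : ↥Dmax) (h : κ ρ (u : H) ∈ Dmax),
      (κ ρ).symm ((P2 ⟨κ ρ (u : H), h⟩ : ↥Dmax) : H)
        = (((1 + ‖lam‖ ^ 2) / (1 + (ρ ^ m * ‖lam‖) ^ 2)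
              * (ρ ^ m) ^ 2 : ℝ) : ℂ) • ((P1 u : ↥Dmax) : H)
          + (((1 - (ρ ^ m) ^ 2) / (1 + (ρ ^ m * ‖lam‖) ^ 2) : ℝ) : ℂ)
              • p (u : H)) := by
  have hκρ := hhom ρ hρ
  have hc : ρ ^ m ≠ 0 := pow_ne_zero m hρ.ne'
  have hsymm : ∀ x ∈ Dmax, (κ ρ).symm x ∈ Dmax := fun x hx => by
    rw [(κ ρ).symm_apply_eq.mpr (by rw [← hκmul ρ ρ⁻¹ hρ (inv_pos.mpr hρ),
      mul_inv_cancel₀ hρ.ne', hκone])]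
    exact hκDmax ρ⁻¹ (inv_pos.mpr hρ) x hx
  refine ⟨fun u hu => ⟨⟨κ ρ u, hκDmax ρ hρ _ u.2⟩,
    (mem_ker_sub_smul_iff_of_coe_eq_map hκρ hc rfl).mpr hu, rfl⟩,
    fun u hU => ?_⟩
  obtain ⟨q, hq, hqu : (q : H) = p u⟩ := hpr u
  rw [mul_pow]
  set w : Dmax := (((1 + ‖lam‖ ^ 2) / (1 + (ρ ^ m) ^ 2 * ‖lam‖ ^ 2) * (ρ ^ m) ^ 2 : ℝ) : ℂ) • P1 u
    + (((1 - (ρ ^ m) ^ 2) / (1 + (ρ ^ m) ^ 2 * ‖lam‖ ^ 2) : ℝ) : ℂ) • q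
  have hwK : w ∈ LinearMap.ker (A - lam • Dmax.subtype) :=
    add_mem (Submodule.smul_mem _ _ (hP1r u)) (Submodule.smul_mem _ _ hq)
  have hPU : P2 ⟨κ ρ u, hU⟩ = ⟨κ ρ w, hκDmax ρ hρ _ w.2⟩ := by
    refine eq_of_graphInner_sub_eq_zero (hP2r _)
      ((mem_ker_sub_smul_iff_of_coe_eq_map hκρ hc rfl).mpr hwK) (hP2orth _) fun v₂ hv₂ => ?_
    have hv₂v : (v₂ : H) = κ ρ (⟨(κ ρ).symm v₂, hsymm _ v₂.2⟩ : Dmax) :=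
      ((κ ρ).apply_symm_apply _).symm
    rw [graphInner_of_coe_eq_map hκρ hv₂v (x := u - w) (by simp)]
    refine weighted_inner_sub_combination_eq_zero (by positivity) hP1r hP1orth hq
      (fun v hv => ?_) ((mem_ker_sub_smul_iff_of_coe_eq_map hκρ hc hv₂v).mp hv₂)
    simpa [← hqu] using hporth u v ⟨v, hv, rfl⟩
  rw [hPU]
  simp [w, ← hqu]

/-- For a κ-homogeneous operator of degree `m`, `κ_ρ` maps `K_λ = ker(A − λ)` onto
`K_{ρ^m λ}`, and the graph-orthogonal projections satisfy
`κ_ρ⁻¹ π_{K_{ρ^m λ}} κ_ρ = (1+|λ|²)/(1+|ρ^m λ|²) ρ^{2m} π_{K_λ}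
  + (1−ρ^{2m})/(1+|ρ^m λ|²) p_{K_λ}`. -/
theorem stmt_14 {H : Type*} [NormedAddCommGroup H] [InnerProductSpace ℂ H] [CompleteSpace H]
    (κ : ℝ → (H ≃ₗᵢ[ℂ] H))
    (hκmul : ∀ ρ σ : ℝ, 0 < ρ → 0 < σ → ∀ x : H, κ (ρ * σ) x = κ ρ (κ σ x))
    (hκone : ∀ x : H, κ 1 x = x)
    (Dmax : Submodule ℂ H) (m : ℕ) (hm : 0 < m)
    (A : ↥Dmax →ₗ[ℂ] H)
    (hκDmax : ∀ ρ : ℝ, 0 < ρ → ∀ x ∈ Dmax, κ ρ x ∈ Dmax)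
    (hhom : ∀ (ρ : ℝ), 0 < ρ → ∀ (u : ↥Dmax) (h : κ ρ (u : H) ∈ Dmax),
      A ⟨κ ρ (u : H), h⟩ = ((ρ ^ m : ℝ) : ℂ) • κ ρ (A u))
    (lam : ℂ) (ρ : ℝ) (hρ : 0 < ρ)
    (hfin : FiniteDimensional ℂ (LinearMap.ker (A - lam • Dmax.subtype)))
    -- P1 = π_{K_λ}: the graph-orthogonal projection of D_max onto K_λ
    (P1 : ↥Dmax →ₗ[ℂ] ↥Dmax)
    (hP1r : ∀ u, P1 u ∈ LinearMap.ker (A - lam • Dmax.subtype))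
    (hP1id : ∀ u ∈ LinearMap.ker (A - lam • Dmax.subtype), P1 u = u)
    (hP1orth : ∀ (u : ↥Dmax), ∀ v ∈ LinearMap.ker (A - lam • Dmax.subtype),
      ⟪A v, A (u - P1 u)⟫ + ⟪(v : H), ((u - P1 u : ↥Dmax) : H)⟫ = 0)
    -- P2 = π_{K_{ρ^m λ}}: the graph-orthogonal projection of D_max onto K_{ρ^m λ}
    (P2 : ↥Dmax →ₗ[ℂ] ↥Dmax)
    (hP2r : ∀ u, P2 u ∈ LinearMap.ker (A - (((ρ ^ m : ℝ) : ℂ) * lam) • Dmax.subtype))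
    (hP2id : ∀ u ∈ LinearMap.ker (A - (((ρ ^ m : ℝ) : ℂ) * lam) • Dmax.subtype), P2 u = u)
    (hP2orth : ∀ (u : ↥Dmax), ∀ v ∈ LinearMap.ker (A - (((ρ ^ m : ℝ) : ℂ) * lam) • Dmax.subtype),
      ⟪A v, A (u - P2 u)⟫ + ⟪(v : H), ((u - P2 u : ↥Dmax) : H)⟫ = 0)
    -- p = p_{K_λ}: the H-orthogonal projection onto K_λ (viewed inside H)
    (p : H →ₗ[ℂ] H)
    (hpr : ∀ w : H, p w ∈ Submodule.map Dmax.subtype (LinearMap.ker (A - lam • Dmax.subtype)))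
    (hpid : ∀ w ∈ Submodule.map Dmax.subtype (LinearMap.ker (A - lam • Dmax.subtype)), p w = w)
    (hporth : ∀ (w : H), ∀ v ∈ Submodule.map Dmax.subtype
        (LinearMap.ker (A - lam • Dmax.subtype)), ⟪v, w - p w⟫ = 0) :
    -- κ_ρ maps K_λ into K_{ρ^m λ} ...
    (∀ u : ↥Dmax, u ∈ LinearMap.ker (A - lam • Dmax.subtype) →
      κ ρ (u : H) ∈ Submodule.map Dmax.subtype
        (LinearMap.ker (A - (((ρ ^ m : ℝ) : ℂ) * lam) • Dmax.subtype))) ∧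
    -- ... and the projection identity holds
    (∀ (u : ↥Dmax) (h : κ ρ (u : H) ∈ Dmax),
      (κ ρ).symm ((P2 ⟨κ ρ (u : H), h⟩ : ↥Dmax) : H)
        = (((1 + ‖lam‖ ^ 2) / (1 + (ρ ^ m * ‖lam‖) ^ 2)
              * (ρ ^ m) ^ 2 : ℝ) : ℂ) • ((P1 u : ↥Dmax) : H)
          + (((1 - (ρ ^ m) ^ 2) / (1 + (ρ ^ m * ‖lam‖) ^ 2) : ℝ) : ℂ)
              • p (u : H)) :=
  stmt_14_general κ hκmul hκone Dmax m A hκDmax hhom lam ρ hρ P1 hP1r hP1orth P2 hP2r hP2orth p hpr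
    hporth
end

section
/- Let H be a Hilbert space, (κ_ρ) a one-parameter group of unitaries, and A a closed operator with κ-invariant domain D_max ⊆ H satisfying the degree-m homogeneity A − ρ^m λ = ρ^m κ_ρ (A − λ) κ_ρ^{-1}. Let Λ be a closed sector in ℂ, R > 0, and P(λ) : H → D_max a family of bounded operators for λ ∈ Λ with |λ| ≥ R. Then the two estimates ‖P(λ)‖_{L(H)} ≤ C/|λ| and ‖P(λ)‖_{L(H, D_max)} ≤ C (with D_max carrying the graph norm of A) hold for some C > 0 and all λ ∈ Λ_R if and only if ‖κ_{|λ|^{1/m}}^{-1} P(λ)‖_{L(H, D_max)} ≤ C'/|λ| holds for some C' > 0 and all λ ∈ Λ_R. -/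
/-!
Write `ρ = |λ|^{1/m}`. By homogeneity, `‖A κ_ρ⁻¹ u‖ = |λ|⁻¹ ‖A u‖`, and `κ_ρ⁻¹` is unitary, so the
graph norm of `κ_ρ⁻¹ P(λ) f` is comparable to `|λ|⁻¹ ‖A P(λ) f‖ + ‖P(λ) f‖`. Bounding this by
`C/|λ| ‖f‖` is, up to constants, the same as the two bounds `‖P(λ) f‖ ≤ C/|λ| ‖f‖` and
`‖A P(λ) f‖ ≤ C ‖f‖`; the remaining `‖P(λ) f‖` in the graph norm of `P(λ) f` costs a factor
`1 + 1/R` since `|λ| ≥ R`.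
-/

open Real

section SqrtSumSq

theorem le_sqrt_sq_add_sq_left (a b : ℝ) : a ≤ √(a ^ 2 + b ^ 2) :=
  le_sqrt_of_sq_le (le_add_of_nonneg_right (sq_nonneg b))

theorem le_sqrt_sq_add_sq_right (a b : ℝ) : b ≤ √(a ^ 2 + b ^ 2) :=
  le_sqrt_of_sq_le (le_add_of_nonneg_left (sq_nonneg a))

theorem sqrt_sq_add_sq_le_add {a b : ℝ} (ha : 0 ≤ a) (hb : 0 ≤ b) : √(a ^ 2 + b ^ 2) ≤ a + b :=
  (sqrt_le_left (add_nonneg ha hb)).2 (by nlinarith)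

variable {R t a b c C : ℝ}

theorem sqrt_inv_mul_sq_add_sq_le (ht : 0 < t) (ha : 0 ≤ a) (hb : 0 ≤ b)
    (hb_le : b ≤ C / t * c) (hab : √(a ^ 2 + b ^ 2) ≤ C * c) :
    √((t⁻¹ * a) ^ 2 + b ^ 2) ≤ 2 * C / t * c :=
  calc √((t⁻¹ * a) ^ 2 + b ^ 2) ≤ t⁻¹ * a + b := sqrt_sq_add_sq_le_add (by positivity) hb
    _ ≤ t⁻¹ * (C * c) + C / t * c := by
        gcongr
        exact (le_sqrt_sq_add_sq_left a b).trans hab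
    _ = 2 * C / t * c := by ring

theorem le_and_sqrt_sq_add_sq_le_of_sqrt_inv_mul_sq_add_sq_le (hR : 0 < R) (hRt : R ≤ t)
    (ha : 0 ≤ a) (hb : 0 ≤ b) (hC : 0 ≤ C) (hc : 0 ≤ c)
    (h : √((t⁻¹ * a) ^ 2 + b ^ 2) ≤ C / t * c) :
    b ≤ (C + C / R) / t * c ∧ √(a ^ 2 + b ^ 2) ≤ (C + C / R) * c := by
  have ht : 0 < t := hR.trans_le hRt
  have hb_le : b ≤ C / t * c := (le_sqrt_sq_add_sq_right _ _).trans h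
  have ha_le : a ≤ C * c := by
    have := (le_sqrt_sq_add_sq_left _ _).trans h
    rwa [inv_mul_eq_div, div_mul_eq_mul_div, div_le_div_iff_of_pos_right ht] at this
  refine ⟨hb_le.trans (by gcongr; exact le_add_of_nonneg_right (by positivity)), ?_⟩
  calc √(a ^ 2 + b ^ 2) ≤ a + b := sqrt_sq_add_sq_le_add ha hb
    _ ≤ C * c + C / R * c := by gcongr; exact hb_le.trans (by gcongr)
    _ = (C + C / R) * c := by ring

end SqrtSumSq

section Homogeneous

variable {H : Type*} [NormedAddCommGroup H] [NormedSpace ℂ H] {κ : ℝ → (H ≃ₗᵢ[ℂ] H)}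
  {Dmax : Submodule ℂ H} {m : ℕ} {A : ↥Dmax →ₗ[ℂ] H}

theorem norm_apply_kappa_of_homogeneous
    (hhom : ∀ (ρ : ℝ), 0 < ρ → ∀ (u : ↥Dmax) (h : κ ρ (u : H) ∈ Dmax),
      A ⟨κ ρ (u : H), h⟩ = ((ρ ^ m : ℝ) : ℂ) • κ ρ (A u))
    {ρ : ℝ} (hρ : 0 < ρ) (u : ↥Dmax) (h : κ ρ (u : H) ∈ Dmax) :
    ‖A ⟨κ ρ (u : H), h⟩‖ = ρ ^ m * ‖A u‖ := by
  rw [hhom ρ hρ u h, norm_smul, LinearIsometryEquiv.norm_map, Complex.norm_real,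
    norm_of_nonneg (by positivity)]

theorem norm_apply_kappa_inv_rpow_of_homogeneous
    (hhom : ∀ (ρ : ℝ), 0 < ρ → ∀ (u : ↥Dmax) (h : κ ρ (u : H) ∈ Dmax),
      A ⟨κ ρ (u : H), h⟩ = ((ρ ^ m : ℝ) : ℂ) • κ ρ (A u))
    (hm : m ≠ 0) {t : ℝ} (ht : 0 < t) (u : ↥Dmax)
    (h : κ ((t ^ ((m : ℝ)⁻¹))⁻¹) (u : H) ∈ Dmax) :
    ‖A ⟨κ ((t ^ ((m : ℝ)⁻¹))⁻¹) (u : H), h⟩‖ = t⁻¹ * ‖A u‖ := by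
  rw [norm_apply_kappa_of_homogeneous hhom (by positivity), inv_pow,
    rpow_inv_natCast_pow ht.le hm]

end Homogeneous

theorem stmt_16_general {H : Type*} [NormedAddCommGroup H] [InnerProductSpace ℂ H]
    (κ : ℝ → (H ≃ₗᵢ[ℂ] H))
    (Dmax : Submodule ℂ H) (m : ℕ) (hm : 0 < m)
    (A : ↥Dmax →ₗ[ℂ] H)
    (hκDmax : ∀ ρ : ℝ, 0 < ρ → ∀ x ∈ Dmax, κ ρ x ∈ Dmax)
    (hhom : ∀ (ρ : ℝ), 0 < ρ → ∀ (u : ↥Dmax) (h : κ ρ (u : H) ∈ Dmax),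
      A ⟨κ ρ (u : H), h⟩ = ((ρ ^ m : ℝ) : ℂ) • κ ρ (A u))
    -- Λ a closed sector, R > 0
    (Λ : Set ℂ)
    (R : ℝ) (hR : 0 < R)
    -- the family of operators P(λ) : H → D_max
    (P : ℂ → (H →ₗ[ℂ] H)) (hP : ∀ (lam : ℂ) (f : H), P lam f ∈ Dmax) :
    (∃ C > (0 : ℝ), ∀ lam ∈ Λ, R ≤ ‖lam‖ →
        (∀ f : H, ‖P lam f‖ ≤ C / ‖lam‖ * ‖f‖) ∧
        (∀ (f : H) (h : P lam f ∈ Dmax),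
          Real.sqrt (‖A ⟨P lam f, h⟩‖ ^ 2 + ‖P lam f‖ ^ 2) ≤ C * ‖f‖)) ↔
    (∃ C > (0 : ℝ), ∀ lam ∈ Λ, R ≤ ‖lam‖ →
        ∀ (f : H) (h : κ ((‖lam‖ ^ ((m : ℝ)⁻¹))⁻¹) (P lam f) ∈ Dmax),
          Real.sqrt (‖A ⟨κ ((‖lam‖ ^ ((m : ℝ)⁻¹))⁻¹) (P lam f), h⟩‖ ^ 2
              + ‖κ ((‖lam‖ ^ ((m : ℝ)⁻¹))⁻¹) (P lam f)‖ ^ 2)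
            ≤ C / ‖lam‖ * ‖f‖) := by
  have hscale : ∀ lam : ℂ, R ≤ ‖lam‖ → ∀ (f : H)
      (h : κ ((‖lam‖ ^ ((m : ℝ)⁻¹))⁻¹) (P lam f) ∈ Dmax),
      ‖A ⟨κ ((‖lam‖ ^ ((m : ℝ)⁻¹))⁻¹) (P lam f), h⟩‖ = ‖lam‖⁻¹ * ‖A ⟨P lam f, hP lam f⟩‖ :=
    fun lam hlam f h ↦
      norm_apply_kappa_inv_rpow_of_homogeneous hhom hm.ne' (hR.trans_le hlam) ⟨_, hP lam f⟩ h
  constructor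
  · rintro ⟨C, hC, hest⟩
    refine ⟨2 * C, by positivity, fun lam hlam hlamR f h ↦ ?_⟩
    rw [hscale lam hlamR f h, LinearIsometryEquiv.norm_map]
    exact sqrt_inv_mul_sq_add_sq_le (hR.trans_le hlamR) (norm_nonneg _) (norm_nonneg _)
      ((hest lam hlam hlamR).1 f) ((hest lam hlam hlamR).2 f (hP lam f))
  · rintro ⟨C, hC, hest⟩
    refine ⟨C + C / R, by positivity, fun lam hlam hlamR ↦ ?_⟩
    have hρ : 0 < (‖lam‖ ^ ((m : ℝ)⁻¹))⁻¹ := by have := hR.trans_le hlamR; positivity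
    have key (f : H) := by
      have hf := hest lam hlam hlamR f (hκDmax _ hρ _ (hP lam f))
      rw [hscale lam hlamR f, LinearIsometryEquiv.norm_map] at hf
      exact le_and_sqrt_sq_add_sq_le_of_sqrt_inv_mul_sq_add_sq_le hR hlamR (norm_nonneg _)
        (norm_nonneg _) hC.le (norm_nonneg f) hf
    exact ⟨fun f ↦ (key f).1, fun f _ ↦ (key f).2⟩

/-- The pair of estimates `‖P(λ)‖_{L(H)} ≤ C/|λ|` and `‖P(λ)‖_{L(H,D_max)} ≤ C` (graph norm)
holds on `Λ_R` iff the single estimate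
`‖κ_{|λ|^{1/m}}^{-1} P(λ)‖_{L(H,D_max)} ≤ C'/|λ|` holds on `Λ_R`. -/
theorem stmt_16 {H : Type*} [NormedAddCommGroup H] [InnerProductSpace ℂ H] [CompleteSpace H]
    (κ : ℝ → (H ≃ₗᵢ[ℂ] H))
    (hκmul : ∀ ρ σ : ℝ, 0 < ρ → 0 < σ → ∀ x : H, κ (ρ * σ) x = κ ρ (κ σ x))
    (hκone : ∀ x : H, κ 1 x = x)
    (Dmax : Submodule ℂ H) (m : ℕ) (hm : 0 < m)
    (A : ↥Dmax →ₗ[ℂ] H)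
    (hκDmax : ∀ ρ : ℝ, 0 < ρ → ∀ x ∈ Dmax, κ ρ x ∈ Dmax)
    (hhom : ∀ (ρ : ℝ), 0 < ρ → ∀ (u : ↥Dmax) (h : κ ρ (u : H) ∈ Dmax),
      A ⟨κ ρ (u : H), h⟩ = ((ρ ^ m : ℝ) : ℂ) • κ ρ (A u))
    -- Λ a closed sector, R > 0
    (Λ : Set ℂ) (hΛclosed : IsClosed Λ)
    (hΛsector : ∀ lam ∈ Λ, ∀ r : ℝ, 0 ≤ r → (r : ℂ) * lam ∈ Λ)
    (R : ℝ) (hR : 0 < R)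
    -- the family of operators P(λ) : H → D_max
    (P : ℂ → (H →ₗ[ℂ] H)) (hP : ∀ (lam : ℂ) (f : H), P lam f ∈ Dmax) :
    (∃ C > (0 : ℝ), ∀ lam ∈ Λ, R ≤ ‖lam‖ →
        (∀ f : H, ‖P lam f‖ ≤ C / ‖lam‖ * ‖f‖) ∧
        (∀ (f : H) (h : P lam f ∈ Dmax),
          Real.sqrt (‖A ⟨P lam f, h⟩‖ ^ 2 + ‖P lam f‖ ^ 2) ≤ C * ‖f‖)) ↔
    (∃ C > (0 : ℝ), ∀ lam ∈ Λ, R ≤ ‖lam‖ →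
        ∀ (f : H) (h : κ ((‖lam‖ ^ ((m : ℝ)⁻¹))⁻¹) (P lam f) ∈ Dmax),
          Real.sqrt (‖A ⟨κ ((‖lam‖ ^ ((m : ℝ)⁻¹))⁻¹) (P lam f), h⟩‖ ^ 2
              + ‖κ ((‖lam‖ ^ ((m : ℝ)⁻¹))⁻¹) (P lam f)‖ ^ 2)
            ≤ C / ‖lam‖ * ‖f‖) :=
  stmt_16_general κ Dmax m hm A hκDmax hhom Λ R hR P hP
end
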